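/- Let z₁,…,z_N ∈ ℂ with Im z_n > 0, let Δ⁻ ⊆ {1,…,N}, let r : ℝ → ℂ be continuous and bounded with |r(−s)| = |r(s)| for all s ∈ ℝ, let ν(s) = −(1/(2π)) log(1 + |r(s)|²), let 0 < k₂ < k₁ be real, and set I = (−k₁,−k₂) ∪ (k₂,k₁), δ(k) = exp( i ∫_I ν(s)/(s−k) ds ) for k ∈ ℂ∖closure(I), and T(k) = ∏_{n∈Δ⁻} (k − conj(z_n))/(k − z_n) · δ(k). Then T is analytic in a neighborhood of k = 0, T(0) = T₀ where T₀ = ∏_{n∈Δ⁻} conj(z_n)/z_n, and there exist C > 0, ρ > 0 such that for all 0 < |k| ≤ ρ, | T(k) − T₀ (1 + i T₁ k) | ≤ C |k|², where T₁ = ∫_I ν(s)/s² ds − Σ_{n∈Δ⁻} 2 Im(z_n)/|z_n|². -/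

import Mathlib

open MeasureTheory

/-- `ν(s) = −(1/2π) log(1 + |r(s)|²)`. -/
noncomputable def nuFun (r : ℝ → ℂ) (s : ℝ) : ℝ :=
  -(1 / (2 * Real.pi)) * Real.log (1 + ‖r s‖ ^ 2)

/-- `δ(k) = exp( i ∫_I ν(s)/(s−k) ds )`. -/
noncomputable def deltaFun (ν : ℝ → ℝ) (I : Set ℝ) (k : ℂ) : ℂ :=
  Complex.exp (Complex.I * ∫ s in I, ((ν s : ℂ) / ((s : ℂ) - k)))

/-- `T(k) = ∏_{n∈Δ⁻} (k − conj z_n)/(k − z_n) · δ(k)`. -/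
noncomputable def Tfun {N : ℕ} (z : Fin N → ℂ) (Δ : Finset (Fin N))
    (ν : ℝ → ℝ) (I : Set ℝ) (k : ℂ) : ℂ :=
  (∏ n ∈ Δ, (k - starRingEnd ℂ (z n)) / (k - z n)) * deltaFun ν I k

open Metric in
lemma taylor2 {f : ℂ → ℂ} (hf : AnalyticAt ℂ f 0) :
    ∃ C : ℝ, 0 < C ∧ ∃ ρ : ℝ, 0 < ρ ∧ ∀ k : ℂ, ‖k‖ ≤ ρ →
      ‖f k - (f 0 + deriv f 0 * k)‖ ≤ C * ‖k‖ ^ 2 := by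
  obtain ⟨p, hp⟩ := hf
  have hO := hp.isBigO_sub_partialSum_pow 2
  have hps : ∀ y : ℂ, p.partialSum 2 y = f 0 + deriv f 0 * y := by
    intro y
    have h0 : p 0 (fun _ => y) = f 0 := hp.coeff_zero _
    have h1 : deriv f 0 = p.coeff 1 := hp.deriv
    have h0' : p.coeff 0 = f 0 := by
      rw [← h0, FormalMultilinearSeries.coeff]; exact congrArg _ (Subsingleton.elim _ _)
    simp [FormalMultilinearSeries.partialSum, Finset.sum_range_succ, h0',
      FormalMultilinearSeries.apply_eq_pow_smul_coeff, h1, smul_eq_mul]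
    ring
  rw [Asymptotics.isBigO_iff] at hO
  obtain ⟨c, hc⟩ := hO
  rw [Metric.eventually_nhds_iff] at hc
  obtain ⟨ε, hε, hball⟩ := hc
  refine ⟨max c 1, lt_of_lt_of_le one_pos (le_max_right _ _), ε/2, by linarith, ?_⟩
  intro k hk
  have hkball : dist k 0 < ε := by rw [dist_zero_right]; linarith
  have h2 := hball hkball
  simp only [zero_add, hps] at h2
  calc ‖f k - (f 0 + deriv f 0 * k)‖ ≤ c * ‖‖k‖ ^ 2‖ := h2
    _ ≤ max c 1 * ‖k‖ ^ 2 := by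
        rw [Real.norm_eq_abs, abs_of_nonneg (by positivity)]
        exact mul_le_mul_of_nonneg_right (le_max_left _ _) (by positivity)

lemma my_integral_ofReal {X : Type*} [MeasurableSpace X] {μ : Measure X} {f : X → ℝ} :
    ∫ x, ((f x : ℝ) : ℂ) ∂μ = ((∫ x, f x ∂μ : ℝ) : ℂ) := integral_ofReal

open Metric in
/-- Analyticity of `T` at the origin and its expansion
`T(k) = T₀ (1 + i T₁ k) + O(k²)` as `k → 0`. -/
theorem stmt10 (N : ℕ) (z : Fin N → ℂ) (hz : ∀ n, 0 < (z n).im)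
    (Δ : Finset (Fin N)) (r : ℝ → ℂ) (hrc : Continuous r) (hrb : ∃ M : ℝ, ∀ s, ‖r s‖ ≤ M)
    (hre : ∀ s : ℝ, ‖r (-s)‖ = ‖r s‖)
    (k₂ k₁ : ℝ) (h02 : 0 < k₂) (h21 : k₂ < k₁) :
    AnalyticAt ℂ
      (fun k => Tfun z Δ (nuFun r) (Set.Ioo (-k₁) (-k₂) ∪ Set.Ioo k₂ k₁) k) 0 ∧
    Tfun z Δ (nuFun r) (Set.Ioo (-k₁) (-k₂) ∪ Set.Ioo k₂ k₁) 0
      = ∏ n ∈ Δ, starRingEnd ℂ (z n) / z n ∧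
    ∃ C : ℝ, 0 < C ∧ ∃ ρ : ℝ, 0 < ρ ∧ ∀ k : ℂ, 0 < ‖k‖ → ‖k‖ ≤ ρ →
      ‖Tfun z Δ (nuFun r) (Set.Ioo (-k₁) (-k₂) ∪ Set.Ioo k₂ k₁) k
          - (∏ n ∈ Δ, starRingEnd ℂ (z n) / z n)
            * (1 + Complex.I * (Complex.ofReal
                ((∫ s in (Set.Ioo (-k₁) (-k₂) ∪ Set.Ioo k₂ k₁), nuFun r s / s ^ 2)
                  - ∑ n ∈ Δ, 2 * (z n).im / ‖z n‖ ^ 2)) * k)‖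
        ≤ C * ‖k‖ ^ 2 := by
  classical
  obtain ⟨M₀, hM₀⟩ := hrb
  set ν : ℝ → ℝ := nuFun r with hν
  set I : Set ℝ := Set.Ioo (-k₁) (-k₂) ∪ Set.Ioo k₂ k₁ with hI
  have hImeas : MeasurableSet I := measurableSet_Ioo.union measurableSet_Ioo
  have hνcont : Continuous ν := by
    apply continuous_const.mul
    apply Continuous.log
    · exact continuous_const.add ((hrc.norm).pow 2)
    · intro s; positivity
  set B : ℝ := (1 / (2 * Real.pi)) * Real.log (1 + (max M₀ 0) ^ 2) with hB
  have hBnn : 0 ≤ B := by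
    apply mul_nonneg
    · positivity
    · exact Real.log_nonneg (by nlinarith [sq_nonneg (max M₀ 0)])
  have hνB : ∀ s, |ν s| ≤ B := by
    intro s
    have h1 : (0:ℝ) ≤ Real.log (1 + ‖r s‖ ^ 2) :=
      Real.log_nonneg (by nlinarith [sq_nonneg ‖r s‖])
    have h2 : Real.log (1 + ‖r s‖ ^ 2) ≤ Real.log (1 + (max M₀ 0) ^ 2) := by
      apply Real.log_le_log (by positivity)
      have := hM₀ s
      nlinarith [norm_nonneg (r s), le_max_left M₀ 0]
    have hpi : (0:ℝ) < 1 / (2 * Real.pi) := by positivity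
    rw [hν]; unfold nuFun
    rw [abs_mul, abs_neg, abs_of_pos hpi, abs_of_nonneg h1]
    exact mul_le_mul_of_nonneg_left h2 hpi.le
  have hIsub : I ⊆ Set.Ioo (-k₁) k₁ := by
    rintro s (⟨a, b⟩ | ⟨a, b⟩) <;> exact ⟨by linarith, by linarith⟩
  have hμI : volume I < ⊤ := lt_of_le_of_lt (measure_mono hIsub) measure_Ioo_lt_top
  have hmeas1 : ∀ x : ℂ, AEStronglyMeasurable (fun s : ℝ => (ν s : ℂ) / ((s : ℂ) - x))
      (volume.restrict I) := by
    intro x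
    exact (((Complex.continuous_ofReal.comp hνcont).measurable).div
      ((Complex.continuous_ofReal.sub continuous_const).measurable)).aestronglyMeasurable
  have hmeas2 : ∀ x : ℂ, AEStronglyMeasurable (fun s : ℝ => (ν s : ℂ) / ((s : ℂ) - x) ^ 2)
      (volume.restrict I) := by
    intro x
    exact (((Complex.continuous_ofReal.comp hνcont).measurable).div
      (((Complex.continuous_ofReal.sub continuous_const).pow 2).measurable)).aestronglyMeasurable
  have habs : ∀ s ∈ I, k₂ ≤ |s| := by
    rintro s (⟨a, b⟩ | ⟨a, b⟩)
    · exact le_abs.2 (Or.inr (by linarith))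
    · exact le_abs.2 (Or.inl (by linarith))
  have hsep : ∀ s ∈ I, ∀ x : ℂ, ‖x‖ < k₂ → k₂ - ‖x‖ ≤ ‖(s : ℂ) - x‖ := by
    intro s hs x hx
    have h1 : ‖(s : ℂ)‖ - ‖x‖ ≤ ‖(s : ℂ) - x‖ := norm_sub_norm_le _ _
    have h2 : ‖(s : ℂ)‖ = |s| := by rw [Complex.norm_real, Real.norm_eq_abs]
    have := habs s hs
    linarith
  have key : ∀ k₀ : ℂ, ‖k₀‖ < k₂ →
      HasDerivAt (fun k : ℂ => ∫ s in I, (ν s : ℂ) / ((s : ℂ) - k))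
        (∫ s in I, (ν s : ℂ) / ((s : ℂ) - k₀) ^ 2) k₀ := by
    intro k₀ hk₀
    set ε : ℝ := (k₂ - ‖k₀‖) / 2 with hε
    have hεpos : 0 < ε := by rw [hε]; linarith
    have hballx : ∀ x ∈ ball k₀ ε, ‖x‖ < k₂ ∧ ε ≤ k₂ - ‖x‖ := by
      intro x hx
      rw [mem_ball_iff_norm] at hx
      have h1 : ‖x‖ ≤ ‖k₀‖ + ‖x - k₀‖ := by
        calc ‖x‖ = ‖k₀ + (x - k₀)‖ := by ring_nf
          _ ≤ ‖k₀‖ + ‖x - k₀‖ := norm_add_le _ _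
      exact ⟨by linarith, by linarith⟩
    have hconst : Integrable (fun _ : ℝ => B / ε ^ 2) (volume.restrict I) :=
      integrableOn_const hμI.ne
    have hconst' : Integrable (fun _ : ℝ => B / ε) (volume.restrict I) :=
      integrableOn_const hμI.ne
    refine (hasDerivAt_integral_of_dominated_loc_of_deriv_le
      (F := fun (x : ℂ) (s : ℝ) => (ν s : ℂ) / ((s : ℂ) - x))
      (F' := fun (x : ℂ) (s : ℝ) => (ν s : ℂ) / ((s : ℂ) - x) ^ 2)
      (bound := fun _ : ℝ => B / ε ^ 2) (μ := volume.restrict I) (x₀ := k₀) (ball_mem_nhds k₀ hεpos)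
      (Filter.Eventually.of_forall fun x => hmeas1 x) ?_ (hmeas2 k₀) ?_ hconst ?_).2
    · apply Integrable.mono' hconst' (hmeas1 k₀)
      filter_upwards [ae_restrict_mem hImeas] with s hs
      have h1 : k₂ - ‖k₀‖ ≤ ‖(s : ℂ) - k₀‖ := hsep s hs k₀ hk₀
      have h2 : ε ≤ ‖(s : ℂ) - k₀‖ := by linarith
      rw [norm_div, Complex.norm_real, Real.norm_eq_abs]
      exact div_le_div₀ hBnn (hνB s) hεpos h2
    · filter_upwards [ae_restrict_mem hImeas] with s hs x hx
      obtain ⟨hx1, hx2⟩ := hballx x hx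
      have h2 : ε ≤ ‖(s : ℂ) - x‖ := le_trans hx2 (hsep s hs x hx1)
      rw [norm_div, Complex.norm_real, Real.norm_eq_abs, norm_pow]
      exact div_le_div₀ hBnn (hνB s) (by positivity) (pow_le_pow_left₀ hεpos.le h2 2)
    · filter_upwards [ae_restrict_mem hImeas] with s hs x hx
      obtain ⟨hx1, hx2⟩ := hballx x hx
      have hne : (s : ℂ) - x ≠ 0 := by
        intro h
        have := le_trans hx2 (hsep s hs x hx1)
        rw [h, norm_zero] at this
        linarith
      have h1 : HasDerivAt (fun y : ℂ => (s : ℂ) - y) (-1) x := (hasDerivAt_id x).const_sub _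
      have h2 := (h1.inv hne).const_mul ((ν s : ℂ))
      simpa [div_eq_mul_inv] using h2
  set g : ℂ → ℂ := fun k => ∫ s in I, (ν s : ℂ) / ((s : ℂ) - k) with hg
  have hg_diff : DifferentiableOn ℂ g (ball (0:ℂ) k₂) := by
    intro x hx
    rw [mem_ball_zero_iff] at hx
    exact ((key x hx).differentiableAt).differentiableWithinAt
  have hg_an : AnalyticAt ℂ g 0 := hg_diff.analyticAt (ball_mem_nhds _ h02)
  have hνeven : ∀ s, ν (-s) = ν s := by
    intro s; rw [hν]; unfold nuFun; rw [hre]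
  have hmono : ∀ A : Set ℝ, MeasurableSet A → A ⊆ I →
      IntegrableOn (fun s => ν s / s) A volume := by
    intro A hA hsub
    have hμA : volume A < ⊤ :=
      lt_of_le_of_lt (measure_mono (hsub.trans hIsub)) measure_Ioo_lt_top
    apply Integrable.mono'
      (integrableOn_const hμA.ne : IntegrableOn (fun _ => B / k₂) A volume)
    · exact ((hνcont.measurable).div measurable_id).aestronglyMeasurable
    · filter_upwards [ae_restrict_mem hA] with s hs
      rw [Real.norm_eq_abs, abs_div]
      exact div_le_div₀ hBnn (hνB s) h02 (habs s (hsub hs))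
  have hdisj : Disjoint (Set.Ioo (-k₁) (-k₂)) (Set.Ioo k₂ k₁) := by
    rw [Set.disjoint_left]; rintro s ⟨_, h⟩ ⟨h', _⟩; linarith
  have hzero : (∫ s in I, ν s / s) = 0 := by
    rw [hI, setIntegral_union hdisj measurableSet_Ioo
      (hmono _ measurableSet_Ioo (hI ▸ Set.subset_union_left))
      (hmono _ measurableSet_Ioo (hI ▸ Set.subset_union_right))]
    have h1 : (∫ s in Set.Ioo (-k₁) (-k₂), ν s / s) = ∫ x in k₂..k₁, ν (-x) / (-x) := by
      rw [intervalIntegral.integral_comp_neg (f := fun s => ν s / s)]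
      rw [intervalIntegral.integral_of_le (by linarith : -k₁ ≤ -k₂),
        integral_Ioc_eq_integral_Ioo]
    have h2 : (∫ x in k₂..k₁, ν (-x) / (-x)) = -∫ x in k₂..k₁, ν x / x := by
      rw [← intervalIntegral.integral_neg]
      apply intervalIntegral.integral_congr
      intro x _
      simp only [hνeven, div_neg]
    have h3 : (∫ s in Set.Ioo k₂ k₁, ν s / s) = ∫ x in k₂..k₁, ν x / x := by
      rw [intervalIntegral.integral_of_le (by linarith : k₂ ≤ k₁),
        integral_Ioc_eq_integral_Ioo]
    rw [h1, h2, h3]; ring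
  have hg0 : g 0 = 0 := by
    have h1 : (∫ s in I, (ν s : ℂ) / ((s : ℂ) - 0)) = ∫ s in I, ((ν s / s : ℝ) : ℂ) := by
      apply integral_congr_ae
      filter_upwards with s
      push_cast
      ring
    show (∫ s in I, (ν s : ℂ) / ((s : ℂ) - 0)) = 0
    rw [h1, my_integral_ofReal, hzero]
    norm_cast
  have hgd : HasDerivAt g ((∫ s in I, ν s / s ^ 2 : ℝ) : ℂ) 0 := by
    have h := key 0 (by simpa using h02)
    have h1 : (∫ s in I, (ν s : ℂ) / ((s : ℂ) - 0) ^ 2)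
        = ∫ s in I, ((ν s / s ^ 2 : ℝ) : ℂ) := by
      apply integral_congr_ae
      filter_upwards with s
      push_cast
      ring
    have h2 : (∫ s in I, ((ν s / s ^ 2 : ℝ) : ℂ)) = ((∫ s in I, ν s / s ^ 2 : ℝ) : ℂ) :=
      my_integral_ofReal
    rwa [h1, h2] at h
  -- the pole prefactor
  have hzne : ∀ n, z n ≠ 0 := by
    intro n h
    have := hz n
    rw [h] at this
    simp at this
  have hcne : ∀ n, starRingEnd ℂ (z n) ≠ 0 := by
    intro n
    simpa using hzne n
  set P : ℂ → ℂ := fun k => ∏ n ∈ Δ, (k - starRingEnd ℂ (z n)) / (k - z n) with hP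
  have hP_an : AnalyticAt ℂ P 0 := by
    apply Finset.analyticAt_fun_prod
    intro n _
    apply AnalyticAt.div
    · exact analyticAt_id.sub analyticAt_const
    · exact analyticAt_id.sub analyticAt_const
    · simpa using hzne n
  have hE_an : AnalyticAt ℂ (fun k => deltaFun ν I k) 0 :=
    (analyticAt_const.mul hg_an).cexp
  have hT_an : AnalyticAt ℂ (fun k => Tfun z Δ ν I k) 0 := hP_an.mul hE_an
  have hδ0 : deltaFun ν I 0 = 1 := by
    show Complex.exp (Complex.I * g 0) = 1
    rw [hg0, mul_zero, Complex.exp_zero]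
  have hP0 : P 0 = ∏ n ∈ Δ, starRingEnd ℂ (z n) / z n := by
    apply Finset.prod_congr rfl
    intro n _
    rw [zero_sub, zero_sub, neg_div_neg_eq]
  have hT0 : Tfun z Δ ν I 0 = ∏ n ∈ Δ, starRingEnd ℂ (z n) / z n := by
    show P 0 * deltaFun ν I 0 = _
    rw [hδ0, mul_one, hP0]
  set T₀ : ℂ := ∏ n ∈ Δ, starRingEnd ℂ (z n) / z n with hT₀
  have hPd : HasDerivAt P (∑ n ∈ Δ,
      (∏ m ∈ Δ.erase n, (((0:ℂ) - starRingEnd ℂ (z m)) / ((0:ℂ) - z m))) •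
        ((starRingEnd ℂ (z n) - z n) / (z n) ^ 2)) 0 := by
    apply HasDerivAt.fun_finsetProd
    intro n _
    have h1 : HasDerivAt (fun k : ℂ => k - starRingEnd ℂ (z n)) 1 0 :=
      (hasDerivAt_id 0).sub_const _
    have h2 : HasDerivAt (fun k : ℂ => k - z n) 1 0 := (hasDerivAt_id 0).sub_const _
    have hne : (0:ℂ) - z n ≠ 0 := by simpa using hzne n
    have h3 := h1.fun_div h2 hne
    convert h3 using 1
    rw [zero_sub, zero_sub, neg_sq]
    ring
  have hEd : HasDerivAt (fun k => deltaFun ν I k)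
      (Complex.I * ((∫ s in I, ν s / s ^ 2 : ℝ) : ℂ)) 0 := by
    have h := (hgd.const_mul Complex.I).cexp
    rw [hg0, mul_zero, Complex.exp_zero, one_mul] at h
    exact h
  have hTd := hPd.mul hEd
  rw [hδ0, mul_one] at hTd
  have hterm : ∀ n ∈ Δ,
      (∏ m ∈ Δ.erase n, (((0:ℂ) - starRingEnd ℂ (z m)) / ((0:ℂ) - z m))) •
        ((starRingEnd ℂ (z n) - z n) / (z n) ^ 2)
      = T₀ * (Complex.I * ((-(2 * (z n).im / ‖z n‖ ^ 2) : ℝ) : ℂ)) := by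
    intro n hn
    have herase : (∏ m ∈ Δ.erase n, (((0:ℂ) - starRingEnd ℂ (z m)) / ((0:ℂ) - z m)))
        = ∏ m ∈ Δ.erase n, starRingEnd ℂ (z m) / z m := by
      apply Finset.prod_congr rfl
      intro m _
      rw [zero_sub, zero_sub, neg_div_neg_eq]
    have hprod : (∏ m ∈ Δ.erase n, starRingEnd ℂ (z m) / z m) * (starRingEnd ℂ (z n) / z n)
        = T₀ := Finset.prod_erase_mul Δ _ hn
    have hsub : starRingEnd ℂ (z n) - z n = Complex.I * ((-(2 * (z n).im) : ℝ) : ℂ) := by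
      have h := Complex.sub_conj (z n)
      push_cast at h ⊢
      linear_combination -h
    have hnsq : ((‖z n‖ ^ 2 : ℝ) : ℂ) = z n * starRingEnd ℂ (z n) := by
      rw [Complex.mul_conj, Complex.normSq_eq_norm_sq]
    rw [smul_eq_mul, herase, ← hprod, hsub]
    push_cast at hnsq ⊢
    rw [hnsq]
    have hZ : (∏ x ∈ Δ.erase n, z x) ≠ 0 := Finset.prod_ne_zero_iff.2 fun m _ => hzne m
    field_simp [hzne n, hcne n]
  have hD : (∑ n ∈ Δ,
      (∏ m ∈ Δ.erase n, (((0:ℂ) - starRingEnd ℂ (z m)) / ((0:ℂ) - z m))) •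
        ((starRingEnd ℂ (z n) - z n) / (z n) ^ 2))
      = T₀ * (Complex.I * ((-(∑ n ∈ Δ, 2 * (z n).im / ‖z n‖ ^ 2) : ℝ) : ℂ)) := by
    rw [Finset.sum_congr rfl hterm, ← Finset.mul_sum]
    congr 1
    rw [← Finset.mul_sum]
    congr 1
    push_cast
    rw [← Finset.sum_neg_distrib]
  have hderiv : deriv (fun k => Tfun z Δ ν I k) 0
      = T₀ * (Complex.I * (((∫ s in I, ν s / s ^ 2)
          - ∑ n ∈ Δ, 2 * (z n).im / ‖z n‖ ^ 2 : ℝ) : ℂ)) := by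
    rw [show deriv (fun k => Tfun z Δ ν I k) 0
        = deriv (fun y => P y * deltaFun ν I y) 0 from rfl, (show HasDerivAt (fun y => P y * deltaFun ν I y) _ 0 from hTd).deriv, hD, hP0]
    push_cast
    ring
  refine ⟨hT_an, hT0, ?_⟩
  obtain ⟨C, hC, ρ, hρ, hbound⟩ := taylor2 hT_an
  refine ⟨C, hC, ρ, hρ, ?_⟩
  intro k _ hk
  have h := hbound k hk
  have heq : (fun k => Tfun z Δ ν I k) 0
        + deriv (fun k => Tfun z Δ ν I k) 0 * k
      = T₀ * (1 + Complex.I * (Complex.ofReal ((∫ s in I, ν s / s ^ 2)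
          - ∑ n ∈ Δ, 2 * (z n).im / ‖z n‖ ^ 2)) * k) := by
    show Tfun z Δ ν I 0 + _ = _
    rw [hT0, hderiv]
    push_cast
    ring
  rw [heq] at h
  exact h
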